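/- arXiv:2112.11157 — 4 statements merged into one kernel-verified Lean document; each statement's English description precedes it below -/
import Mathlib

section
/- Let d ≥ 1 and p ≥ 1 be integers and let f : ℝ^d → ℝ. Then the infimum of (1/2)·∑_{i=1}^k ( |a_i|^{2/p} + ‖w_i‖₂² ) over all parameters θ = (k, W, b, a, c) with g_{θ,p} = f equals the infimum of ∑_{i=1}^k |a_i|^{1/p} over all parameters θ = (k, W, b, a, c) with g_{θ,p} = f and ‖w_i‖₂ = 1 for every i ∈ {1,…,k} (both infima taken in [0,+∞], with inf over the empty set equal to +∞). -/
open scoped ENNReal RealInnerProductSpace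

/-- The RePU activation `[t]₊^p = max(t,0)^p`. -/
noncomputable def repu (p : ℕ) (t : ℝ) : ℝ := (max t 0) ^ p

lemma repu_mul' (p : ℕ) {s : ℝ} (t : ℝ) (hs : 0 ≤ s) :
    repu p (s * t) = s ^ p * repu p t := by
  unfold repu
  rw [← mul_pow]
  congr 1
  rw [mul_max_of_nonneg _ _ hs, mul_zero]

/-- the infimum of the overall weight cost
`(1/2)·∑ (|aᵢ|^{2/p} + ‖wᵢ‖²)` over all finite-width RePU networks representing `f`
equals the infimum of `∑ |aᵢ|^{1/p}` over such networks with unit-norm inner weights. -/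
theorem stmt_0 (d p : ℕ) (hd : 1 ≤ d) (hp : 1 ≤ p)
    (f : EuclideanSpace ℝ (Fin d) → ℝ) :
    sInf { r : ℝ≥0∞ | ∃ (k : ℕ) (W : Fin k → EuclideanSpace ℝ (Fin d)) (b a : Fin k → ℝ) (c : ℝ),
      (∀ x, f x = (∑ i, a i * repu p (⟪W i, x⟫ - b i)) + c) ∧
      r = ENNReal.ofReal ((1/2) * ∑ i, (|a i| ^ ((2:ℝ) / p) + ‖W i‖ ^ 2)) } =
    sInf { r : ℝ≥0∞ | ∃ (k : ℕ) (W : Fin k → EuclideanSpace ℝ (Fin d)) (b a : Fin k → ℝ) (c : ℝ),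
      (∀ i, ‖W i‖ = 1) ∧
      (∀ x, f x = (∑ i, a i * repu p (⟪W i, x⟫ - b i)) + c) ∧
      r = ENNReal.ofReal (∑ i, |a i| ^ ((1:ℝ) / p)) } := by
  classical
  have hp0 : (p:ℝ) ≠ 0 := by positivity
  apply le_antisymm
  · -- sInf S ≤ sInf T : rebalance a unit-norm network
    apply le_sInf
    rintro r ⟨k, W, b, a, c, hW, hrep, rfl⟩
    set lam : Fin k → ℝ := fun i => |a i| ^ ((1:ℝ)/(2*p)) with hlam
    have hlamnn : ∀ i, 0 ≤ lam i := fun i => Real.rpow_nonneg (abs_nonneg _) _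
    set W' : Fin k → EuclideanSpace ℝ (Fin d) :=
      fun i => if a i = 0 then 0 else lam i • W i with hW'
    set a' : Fin k → ℝ := fun i => if a i = 0 then 0 else a i * (lam i ^ p)⁻¹ with ha'
    set b' : Fin k → ℝ := fun i => lam i * b i with hb'
    refine sInf_le_of_le ⟨k, W', b', a', c, ?_, rfl⟩ ?_
    · intro x
      rw [hrep x]
      congr 1
      apply Finset.sum_congr rfl
      intro i _
      by_cases h : a i = 0
      · simp [hW', ha', h]
      · have hlampos : 0 < lam i := Real.rpow_pos_of_pos (abs_pos.mpr h) _
        simp only [hW', ha', hb', if_neg h]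
        rw [real_inner_smul_left, show lam i * ⟪W i, x⟫ - lam i * b i
            = lam i * (⟪W i, x⟫ - b i) by ring, repu_mul' p _ (hlamnn i)]
        field_simp
    · apply le_of_eq
      congr 1
      rw [Finset.mul_sum]
      apply Finset.sum_congr rfl
      intro i _
      by_cases h : a i = 0
      · simp only [ha', hW', if_pos h, h, abs_zero, norm_zero]
        rw [Real.zero_rpow (by positivity : (2:ℝ)/p ≠ 0),
          Real.zero_rpow (by positivity : (1:ℝ)/p ≠ 0)]
        norm_num
      · have hA : 0 < |a i| := abs_pos.mpr h
        have hlp : lam i ^ p = |a i| ^ ((1:ℝ)/2) := by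
          rw [hlam]
          rw [← Real.rpow_natCast (|a i| ^ ((1:ℝ)/(2*p))) p, ← Real.rpow_mul hA.le]
          congr 1
          field_simp
        have hsq : |a i| ^ ((1:ℝ)/2) * |a i| ^ ((1:ℝ)/2) = |a i| := by
          rw [← Real.rpow_add hA]; norm_num
        have ha'i : |a' i| = |a i| ^ ((1:ℝ)/2) := by
          rw [ha']
          simp only [if_neg h]
          rw [abs_mul, abs_inv, hlp, abs_of_pos (Real.rpow_pos_of_pos hA _)]
          field_simp [ne_of_gt (Real.rpow_pos_of_pos hA ((1:ℝ)/2))]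
          linarith [hsq]
        have hn : ‖W' i‖ = |a i| ^ ((1:ℝ)/(2*p)) := by
          rw [hW']
          simp only [if_neg h]
          rw [norm_smul, hW i, mul_one, Real.norm_eq_abs, hlam,
            abs_of_nonneg (Real.rpow_nonneg (abs_nonneg _) _)]
        rw [ha'i, hn]
        rw [← Real.rpow_natCast (|a i| ^ ((1:ℝ)/(2*(p:ℝ)))) 2, ← Real.rpow_mul hA.le,
          ← Real.rpow_mul hA.le]
        have e1 : ((1:ℝ)/2) * (2/p) = 1/p := by field_simp
        have e2 : ((1:ℝ)/(2*p)) * ((2:ℕ):ℝ) = 1/p := by push_cast; field_simp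
        rw [e1, e2]
        ring
  · -- sInf T ≤ sInf S : normalize a general network
    apply le_sInf
    rintro r ⟨k, W, b, a, c, hrep, rfl⟩
    set e0 : EuclideanSpace ℝ (Fin d) := EuclideanSpace.single ⟨0, hd⟩ (1:ℝ) with he0def
    have he0 : ‖e0‖ = 1 := by simp [he0def, EuclideanSpace.norm_single]
    set W' : Fin k → EuclideanSpace ℝ (Fin d) :=
      fun i => if W i = 0 then e0 else ‖W i‖⁻¹ • W i with hW'
    set a' : Fin k → ℝ := fun i => if W i = 0 then 0 else a i * ‖W i‖ ^ p with ha'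
    set b' : Fin k → ℝ := fun i => if W i = 0 then 0 else b i * ‖W i‖⁻¹ with hb'
    set c' : ℝ := c + ∑ i, if W i = 0 then a i * repu p (0 - b i) else 0 with hc'
    refine sInf_le_of_le ⟨k, W', b', a', c', ?_, ?_, rfl⟩ ?_
    · intro i
      by_cases h : W i = 0
      · simpa [hW', h] using he0
      · simp only [hW', if_neg h]
        exact norm_smul_inv_norm h
    · intro x
      rw [hrep x, hc']
      rw [show (∑ i, a' i * repu p (⟪W' i, x⟫ - b' i))
            + (c + ∑ i, if W i = 0 then a i * repu p (0 - b i) else 0)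
          = (∑ i, (a' i * repu p (⟪W' i, x⟫ - b' i)
            + if W i = 0 then a i * repu p (0 - b i) else 0)) + c by
        rw [Finset.sum_add_distrib]; ring]
      congr 1
      apply Finset.sum_congr rfl
      intro i _
      by_cases h : W i = 0
      · simp [hW', ha', h]
      · have hn : 0 < ‖W i‖ := norm_pos_iff.mpr h
        simp only [hW', ha', hb', if_neg h, add_zero]
        rw [real_inner_smul_left, show ‖W i‖⁻¹ * ⟪W i, x⟫ - b i * ‖W i‖⁻¹
            = ‖W i‖⁻¹ * (⟪W i, x⟫ - b i) by ring,
          repu_mul' p _ (by positivity : (0:ℝ) ≤ ‖W i‖⁻¹)]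
        rw [inv_pow]
        field_simp
    · apply ENNReal.ofReal_le_ofReal
      rw [Finset.mul_sum]
      apply Finset.sum_le_sum
      intro i _
      by_cases h : W i = 0
      · simp only [ha', if_neg, if_pos h, abs_zero, h, norm_zero]
        rw [Real.zero_rpow (by positivity : (1:ℝ)/p ≠ 0)]
        positivity
      · have hn : 0 < ‖W i‖ := norm_pos_iff.mpr h
        have key : |a' i| ^ ((1:ℝ)/p) = |a i| ^ ((1:ℝ)/p) * ‖W i‖ := by
          rw [ha']
          simp only [if_neg h]
          rw [abs_mul, abs_of_nonneg (by positivity : (0:ℝ) ≤ ‖W i‖ ^ p),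
            Real.mul_rpow (abs_nonneg _) (by positivity),
            ← Real.rpow_natCast ‖W i‖ p, ← Real.rpow_mul hn.le,
            mul_one_div_cancel hp0, Real.rpow_one]
        have hsq : (|a i| ^ ((1:ℝ)/p)) ^ (2:ℕ) = |a i| ^ ((2:ℝ)/p) := by
          rw [← Real.rpow_natCast (|a i| ^ ((1:ℝ)/p)) 2, ← Real.rpow_mul (abs_nonneg _)]
          congr 1
          push_cast
          ring
        rw [key]
        nlinarith [sq_nonneg (|a i| ^ ((1:ℝ)/p) - ‖W i‖), hsq,
          Real.rpow_nonneg (abs_nonneg (a i)) ((1:ℝ)/p), hn.le]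
end

section
/- Let d ≥ 1 and p ≥ 1 be integers. For every finite-width RePU network g_{θ,p} with parameters θ = (k, W, b, a, c), there exist parameters θ' = (k', W', b', a', c') with k' ≤ k, ‖w'_i‖₂ = 1 for every i ∈ {1,…,k'}, g_{θ',p}(x) = g_{θ,p}(x) for all x ∈ ℝ^d, and ∑_{i=1}^{k'} |a'_i|^{1/p} ≤ (1/2)·∑_{i=1}^k ( |a_i|^{2/p} + ‖w_i‖₂² ). -/
open scoped RealInnerProductSpace

/-- every finite-width RePU network can be rewritten with at most as many
units, unit-norm inner weights, and outer `ℓ^{1/p}` cost bounded by the original overall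
weight cost `(1/2)·∑ (|aᵢ|^{2/p} + ‖wᵢ‖²)`. -/
theorem stmt_1 (d p : ℕ) (hd : 1 ≤ d) (hp : 1 ≤ p)
    (k : ℕ) (W : Fin k → EuclideanSpace ℝ (Fin d)) (b a : Fin k → ℝ) (c : ℝ) :
    ∃ (k' : ℕ) (W' : Fin k' → EuclideanSpace ℝ (Fin d)) (b' a' : Fin k' → ℝ) (c' : ℝ),
      k' ≤ k ∧
      (∀ i, ‖W' i‖ = 1) ∧
      (∀ x : EuclideanSpace ℝ (Fin d),
        (∑ i, a' i * repu p (⟪W' i, x⟫ - b' i)) + c' =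
        (∑ i, a i * repu p (⟪W i, x⟫ - b i)) + c) ∧
      (∑ i, |a' i| ^ ((1:ℝ) / p)) ≤ (1/2) * ∑ i, (|a i| ^ ((2:ℝ) / p) + ‖W i‖ ^ 2) := by
  classical
  have hp0 : (p : ℝ) ≠ 0 := by positivity
  set e0 : EuclideanSpace ℝ (Fin d) := EuclideanSpace.single ⟨0, hd⟩ 1 with he0
  have he0norm : ‖e0‖ = 1 := by
    rw [he0, EuclideanSpace.norm_single]; norm_num
  refine ⟨k,
    (fun i => if W i = 0 then e0 else ‖W i‖⁻¹ • W i),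
    (fun i => if W i = 0 then 0 else b i / ‖W i‖),
    (fun i => if W i = 0 then 0 else a i * ‖W i‖ ^ p),
    c + ∑ i, (if W i = 0 then a i * repu p (0 - b i) else 0),
    le_refl k, ?_, ?_, ?_⟩
  · intro i
    by_cases h : W i = 0
    · simp [h, he0norm]
    · simp only [h, if_neg, not_false_iff, if_false]
      rw [norm_smul, norm_inv, norm_norm, inv_mul_cancel₀ (norm_ne_zero_iff.mpr h)]
  · intro x
    have key : ∀ i, (if W i = 0 then 0 else a i * ‖W i‖ ^ p) *
        repu p (⟪(if W i = 0 then e0 else ‖W i‖⁻¹ • W i), x⟫ -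
          (if W i = 0 then 0 else b i / ‖W i‖)) +
        (if W i = 0 then a i * repu p (0 - b i) else 0) =
        a i * repu p (⟪W i, x⟫ - b i) := by
      intro i
      by_cases h : W i = 0
      · simp [h, inner_zero_left]
      · have hr : (0:ℝ) < ‖W i‖ := norm_pos_iff.mpr h
        simp only [h, if_false, add_zero]
        rw [real_inner_smul_left]
        unfold repu
        have : ‖W i‖⁻¹ * ⟪W i, x⟫ - b i / ‖W i‖ = ‖W i‖⁻¹ * (⟪W i, x⟫ - b i) := by
          field_simp
        have hm : max (‖W i‖⁻¹ * (⟪W i, x⟫ - b i)) 0 = ‖W i‖⁻¹ * max (⟪W i, x⟫ - b i) 0 := by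
          rw [mul_max_of_nonneg _ _ (by positivity : (0:ℝ) ≤ ‖W i‖⁻¹), mul_zero]
        rw [this, hm, mul_pow, inv_pow]
        field_simp
    calc (∑ i, (if W i = 0 then 0 else a i * ‖W i‖ ^ p) *
            repu p (⟪(if W i = 0 then e0 else ‖W i‖⁻¹ • W i), x⟫ -
              (if W i = 0 then 0 else b i / ‖W i‖))) +
          (c + ∑ i, (if W i = 0 then a i * repu p (0 - b i) else 0))
        = (∑ i, ((if W i = 0 then 0 else a i * ‖W i‖ ^ p) *
            repu p (⟪(if W i = 0 then e0 else ‖W i‖⁻¹ • W i), x⟫ -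
              (if W i = 0 then 0 else b i / ‖W i‖)) +
            (if W i = 0 then a i * repu p (0 - b i) else 0))) + c := by
          rw [Finset.sum_add_distrib]; ring
      _ = (∑ i, a i * repu p (⟪W i, x⟫ - b i)) + c := by
          rw [Finset.sum_congr rfl (fun i _ => key i)]
  · have hmul : (1/2 : ℝ) * ∑ i, (|a i| ^ ((2:ℝ) / p) + ‖W i‖ ^ 2)
        = ∑ i, (|a i| ^ ((2:ℝ) / p) + ‖W i‖ ^ 2) / 2 := by
      rw [Finset.mul_sum]; congr 1; ext i; ring
    rw [hmul]
    apply Finset.sum_le_sum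
    intro i _
    by_cases h : W i = 0
    · simp only [h, if_true, abs_zero]
      rw [Real.zero_rpow (by positivity : (1:ℝ)/p ≠ 0)]
      positivity
    · have hr : (0:ℝ) < ‖W i‖ := norm_pos_iff.mpr h
      simp only [h, if_false]
      have h1 : |a i * ‖W i‖ ^ p| = |a i| * ‖W i‖ ^ p := by
        rw [abs_mul, abs_of_nonneg (by positivity : (0:ℝ) ≤ ‖W i‖ ^ p)]
      rw [h1, Real.mul_rpow (abs_nonneg _) (by positivity)]
      have h2 : (‖W i‖ ^ p : ℝ) ^ ((1:ℝ)/p) = ‖W i‖ := by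
        rw [← Real.rpow_natCast (‖W i‖) p, ← Real.rpow_mul hr.le]
        rw [mul_one_div, div_self hp0, Real.rpow_one]
      rw [h2]
      have h3 : (|a i| ^ ((1:ℝ)/p)) ^ 2 = |a i| ^ ((2:ℝ)/p) := by
        rw [← Real.rpow_natCast (|a i| ^ ((1:ℝ)/p)) 2, ← Real.rpow_mul (abs_nonneg _)]
        congr 1; ring
      have := two_mul_le_add_sq (|a i| ^ ((1:ℝ)/p)) ‖W i‖
      rw [h3] at this
      linarith
end

section
/- Let p ≥ 1 be an odd integer and let (ρ₁, ρ₋₁, c) be an admissible representation of f : ℝ → ℝ. Then f is (p+1)-times differentiable on ℝ and for every x ∈ ℝ, f^{(p+1)}(x) = p!·( ρ₁(x) + ρ₋₁(x) )/ψ(x) = p!·μ₊(x)/ψ(x). -/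
open MeasureTheory Filter

/-- The weight `ψ(b) = 1 + |b|^{p-1}`. -/
noncomputable def ψ (p : ℕ) (b : ℝ) : ℝ := 1 + |b| ^ (p - 1)

namespace Stmt6Aux

open Set Metric

lemma repu_nonneg (m : ℕ) (t : ℝ) : 0 ≤ repu m t := by
  unfold repu; positivity

lemma repu_le_abs_pow (m : ℕ) (t : ℝ) : repu m t ≤ |t| ^ m := by
  unfold repu
  exact pow_le_pow_left₀ (le_max_right t 0) (max_le (le_abs_self t) (abs_nonneg t)) m

lemma continuous_repu (m : ℕ) : Continuous (repu m) := by
  unfold repu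
  exact (continuous_id.max continuous_const).pow m

lemma hasDerivAt_repu (m : ℕ) (hm : 1 ≤ m) (t : ℝ) :
    HasDerivAt (repu (m + 1)) (((m : ℝ) + 1) * repu m t) t := by
  rcases lt_trichotomy t 0 with h | h | h
  · have hz : repu m t = 0 := by
      simp [repu, max_eq_right h.le, zero_pow (by omega : m ≠ 0)]
    rw [hz, mul_zero]
    have hev : (fun _ : ℝ => (0 : ℝ)) =ᶠ[nhds t] repu (m + 1) := by
      filter_upwards [Iio_mem_nhds h] with s hs
      rw [Set.mem_Iio] at hs
      simp [repu, max_eq_right hs.le, zero_pow (by omega : m + 1 ≠ 0)]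
    exact (hasDerivAt_const t (0 : ℝ)).congr_of_eventuallyEq hev.symm
  · subst h
    have hz : repu m 0 = 0 := by simp [repu, zero_pow (by omega : m ≠ 0)]
    rw [hz, mul_zero]
    rw [hasDerivAt_iff_isLittleO]
    simp only [sub_zero, smul_zero, repu, max_self, zero_pow (by omega : m + 1 ≠ 0)]
    rw [Asymptotics.isLittleO_iff]
    intro c hc
    filter_upwards [Metric.ball_mem_nhds (0 : ℝ) (lt_min hc one_pos)] with s hs
    rw [mem_ball, Real.dist_eq, sub_zero] at hs
    have hs1 : |s| ≤ 1 := le_of_lt (lt_of_lt_of_le hs (min_le_right _ _))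
    have hs2 : |s| ≤ c := le_of_lt (lt_of_lt_of_le hs (min_le_left _ _))
    have h1 : ‖max s 0 ^ (m + 1)‖ ≤ |s| ^ (m + 1) := by
      rw [Real.norm_eq_abs, abs_pow]
      exact pow_le_pow_left₀ (abs_nonneg _) (by
        rw [abs_of_nonneg (le_max_right s 0)]
        exact max_le (le_abs_self s) (abs_nonneg s)) _
    refine h1.trans ?_
    have h2 : |s| ^ (m + 1) ≤ |s| ^ 2 :=
      pow_le_pow_of_le_one (abs_nonneg s) hs1 (by omega)
    have : |s| ^ 2 ≤ c * |s| := by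
      rw [sq]
      exact mul_le_mul_of_nonneg_right hs2 (abs_nonneg s)
    rw [Real.norm_eq_abs]
    linarith
  · have hz : repu m t = t ^ m := by simp [repu, max_eq_left h.le]
    rw [hz]
    have hev : (fun s : ℝ => s ^ (m + 1)) =ᶠ[nhds t] repu (m + 1) := by
      filter_upwards [Ioi_mem_nhds h] with s hs
      simp [repu, max_eq_left (le_of_lt (mem_Ioi.mp hs))]
    have := (hasDerivAt_pow (m + 1) t).congr_of_eventuallyEq hev.symm
    simpa using this

lemma lemB (p m : ℕ) (hm : m ≤ p) (b : ℝ) :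
    (1 + |b|) ^ m * (1 + b ^ 2) ≤ 2 ^ (p + 1) * (1 + |b| ^ (p + 2)) := by
  set M := max 1 |b| with hM
  have hM1 : (1 : ℝ) ≤ M := le_max_left _ _
  have hMb : |b| ≤ M := le_max_right _ _
  have h1 : (1 + |b|) ^ m ≤ (2 * M) ^ m :=
    pow_le_pow_left₀ (by positivity) (by linarith) m
  have h2 : (2 * M) ^ m ≤ (2 * M) ^ p := pow_le_pow_right₀ (by linarith) hm
  have h3 : 1 + b ^ 2 ≤ 2 * M ^ 2 := by
    have hb2 : b ^ 2 ≤ M ^ 2 := by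
      rw [← sq_abs b]; exact pow_le_pow_left₀ (abs_nonneg b) hMb 2
    nlinarith
  have h4 : M ^ (p + 2) ≤ 1 + |b| ^ (p + 2) := by
    rcases max_cases 1 |b| with ⟨h, _⟩ | ⟨h, _⟩ <;> rw [hM, h]
    · simp only [one_pow]
      nlinarith [pow_nonneg (abs_nonneg b) (p + 2)]
    · nlinarith [pow_nonneg (abs_nonneg b) (p + 2)]
  calc (1 + |b|) ^ m * (1 + b ^ 2) ≤ (2 * M) ^ p * (2 * M ^ 2) := by
        apply mul_le_mul (h1.trans h2) h3 (by positivity) (by positivity)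
    _ = 2 ^ (p + 1) * M ^ (p + 2) := by
        rw [mul_pow, pow_succ 2 p, pow_add M p 2]; ring
    _ ≤ 2 ^ (p + 1) * (1 + |b| ^ (p + 2)) := by
        apply mul_le_mul_of_nonneg_left h4 (by positivity)

lemma key_bound {p m : ℕ} (hm : m ≤ p) {C : ℝ} (hC : 0 ≤ C) {σ : ℝ → ℝ}
    (hb : ∀ b, |σ b| ≤ C / (1 + |b| ^ (p + 2))) {A : ℝ} (hA : 0 ≤ A)
    {x : ℝ} (hx : |x| ≤ A) (b t : ℝ) (ht : |t| ≤ |x - b|) :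
    |σ b * repu m t| ≤ C * (A + 1) ^ p * 2 ^ (p + 1) / (1 + b ^ 2) := by
  have hψ : (0 : ℝ) < 1 + |b| ^ (p + 2) := by positivity
  have hb2 : (0 : ℝ) < 1 + b ^ 2 := by positivity
  have htA : |t| ≤ (A + 1) * (1 + |b|) := by
    have h0 : |x - b| ≤ |x| + |b| := abs_sub _ _
    nlinarith [abs_nonneg b]
  have h1 : repu m t ≤ (A + 1) ^ m * (1 + |b|) ^ m := by
    calc repu m t ≤ |t| ^ m := repu_le_abs_pow _ _
      _ ≤ ((A + 1) * (1 + |b|)) ^ m := pow_le_pow_left₀ (abs_nonneg t) htA m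
      _ = (A + 1) ^ m * (1 + |b|) ^ m := mul_pow _ _ _
  rw [abs_mul, abs_of_nonneg (repu_nonneg m t)]
  calc |σ b| * repu m t ≤ (C / (1 + |b| ^ (p + 2))) * ((A + 1) ^ m * (1 + |b|) ^ m) :=
        mul_le_mul (hb b) h1 (repu_nonneg m t) (by positivity)
    _ ≤ C * (A + 1) ^ p * 2 ^ (p + 1) / (1 + b ^ 2) := by
        rw [div_mul_eq_mul_div, div_le_div_iff₀ hψ hb2]
        have hAm : (A + 1) ^ m ≤ (A + 1) ^ p := pow_le_pow_right₀ (by linarith) hm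
        calc C * ((A + 1) ^ m * (1 + |b|) ^ m) * (1 + b ^ 2)
            = (C * (A + 1) ^ m) * ((1 + |b|) ^ m * (1 + b ^ 2)) := by ring
          _ ≤ (C * (A + 1) ^ p) * (2 ^ (p + 1) * (1 + |b| ^ (p + 2))) :=
              mul_le_mul (mul_le_mul_of_nonneg_left hAm hC) (lemB p m hm b)
                (by positivity) (by positivity)
          _ = C * (A + 1) ^ p * 2 ^ (p + 1) * (1 + |b| ^ (p + 2)) := by ring

/-- The candidate `m`-th antiderivative family. -/
noncomputable def Gm (σ₁ σ₂ : ℝ → ℝ) : ℕ → ℝ → ℝ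
  | 0 => fun x => (∫ b in Set.Iio x, σ₁ b) - (∫ b in Set.Ioi x, σ₂ b)
  | (m + 1) => fun x => ∫ b : ℝ,
      (σ₁ b * repu (m + 1) (x - b) + (-1 : ℝ) ^ m * σ₂ b * repu (m + 1) (b - x))

section Main

variable {p : ℕ} {C : ℝ} {σ₁ σ₂ : ℝ → ℝ}

lemma abs_le_key (hC : 0 ≤ C) (hb : ∀ b, |σ₁ b| ≤ C / (1 + |b| ^ (p + 2))) (b : ℝ) :
    |σ₁ b| ≤ C * (0 + 1) ^ p * 2 ^ (p + 1) / (1 + b ^ 2) := by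
  have h := key_bound (Nat.zero_le p) hC hb (le_refl (0:ℝ))
    (by simp : |(0:ℝ)| ≤ 0) b 0 (by simp [abs_nonneg])
  simpa [repu] using h

lemma integrable_decay (hC : 0 ≤ C) (hcont : Continuous σ₁)
    (hb : ∀ b, |σ₁ b| ≤ C / (1 + |b| ^ (p + 2))) : Integrable σ₁ := by
  refine Integrable.mono' ((integrable_inv_one_add_sq).const_mul (C * (0 + 1) ^ p * 2 ^ (p + 1)))
    hcont.aestronglyMeasurable (Eventually.of_forall fun b => ?_)
  rw [Real.norm_eq_abs, ← div_eq_mul_inv]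
  exact abs_le_key hC hb b

/-- Integrability of the integrand of `Gm (n)` (exponent `n ≤ p`). -/
lemma integrable_pair {n : ℕ} (hn : n ≤ p) (hC : 0 ≤ C)
    (h₁ : Continuous σ₁) (h₂ : Continuous σ₂)
    (hb₁ : ∀ b, |σ₁ b| ≤ C / (1 + |b| ^ (p + 2)))
    (hb₂ : ∀ b, |σ₂ b| ≤ C / (1 + |b| ^ (p + 2))) (e x : ℝ) :
    Integrable (fun b : ℝ => σ₁ b * repu n (x - b) + e * σ₂ b * repu n (b - x)) := by
  have hcont : Continuous fun b : ℝ => σ₁ b * repu n (x - b) + e * σ₂ b * repu n (b - x) := by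
    have h3 : Continuous fun b : ℝ => repu n (x - b) :=
      (continuous_repu n).comp (continuous_const.sub continuous_id)
    have h4 : Continuous fun b : ℝ => repu n (b - x) :=
      (continuous_repu n).comp (continuous_id.sub continuous_const)
    exact (h₁.mul h3).add ((continuous_const.mul h₂).mul h4)
  set K : ℝ := C * (|x| + 1) ^ p * 2 ^ (p + 1) with hK
  refine Integrable.mono' ((integrable_inv_one_add_sq).const_mul ((1 + |e|) * K))
    hcont.aestronglyMeasurable (Eventually.of_forall fun b => ?_)
  have k1 : |σ₁ b * repu n (x - b)| ≤ K / (1 + b ^ 2) :=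
    key_bound hn hC hb₁ (abs_nonneg x) le_rfl b (x - b) le_rfl
  have k2 : |σ₂ b * repu n (b - x)| ≤ K / (1 + b ^ 2) :=
    key_bound hn hC hb₂ (abs_nonneg x) le_rfl b (b - x) (le_of_eq (abs_sub_comm b x))
  have hKnn : 0 ≤ K / (1 + b ^ 2) := le_trans (abs_nonneg _) k1
  rw [Real.norm_eq_abs]
  calc |σ₁ b * repu n (x - b) + e * σ₂ b * repu n (b - x)|
      ≤ |σ₁ b * repu n (x - b)| + |e| * |σ₂ b * repu n (b - x)| := by
        refine (abs_add_le _ _).trans ?_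
        rw [mul_assoc, abs_mul e, abs_mul (σ₁ b)]
    _ ≤ K / (1 + b ^ 2) + |e| * (K / (1 + b ^ 2)) := by
        gcongr
    _ = (1 + |e|) * K * (1 + b ^ 2)⁻¹ := by
        field_simp

lemma hasDerivAt_Gm_two (hC : 0 ≤ C)
    (h₁ : Continuous σ₁) (h₂ : Continuous σ₂)
    (hb₁ : ∀ b, |σ₁ b| ≤ C / (1 + |b| ^ (p + 2)))
    (hb₂ : ∀ b, |σ₂ b| ≤ C / (1 + |b| ^ (p + 2)))
    {n : ℕ} (hn : n + 2 ≤ p) (x₀ : ℝ) :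
    HasDerivAt (Gm σ₁ σ₂ (n + 2)) (((n + 2 : ℕ) : ℝ) * Gm σ₁ σ₂ (n + 1) x₀) x₀ := by
  set F : ℝ → ℝ → ℝ := fun x b =>
    σ₁ b * repu (n + 2) (x - b) + (-1 : ℝ) ^ (n + 1) * σ₂ b * repu (n + 2) (b - x) with hF
  set F' : ℝ → ℝ → ℝ := fun x b =>
    ((n + 2 : ℕ) : ℝ) * (σ₁ b * repu (n + 1) (x - b) + (-1 : ℝ) ^ n * σ₂ b * repu (n + 1) (b - x))
    with hF'
  set A : ℝ := |x₀| + 1 with hA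
  set K : ℝ := C * (A + 1) ^ p * 2 ^ (p + 1) with hK
  have hGm2 : Gm σ₁ σ₂ (n + 2) = fun x => ∫ b : ℝ, F x b := rfl
  have hcontF : ∀ x : ℝ, Continuous (F x) := by
    intro x
    have h3 : Continuous fun b : ℝ => repu (n + 2) (x - b) :=
      (continuous_repu _).comp (continuous_const.sub continuous_id)
    have h4 : Continuous fun b : ℝ => repu (n + 2) (b - x) :=
      (continuous_repu _).comp (continuous_id.sub continuous_const)
    exact (h₁.mul h3).add ((continuous_const.mul h₂).mul h4)
  have hcontF' : Continuous (F' x₀) := by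
    have h3 : Continuous fun b : ℝ => repu (n + 1) (x₀ - b) :=
      (continuous_repu _).comp (continuous_const.sub continuous_id)
    have h4 : Continuous fun b : ℝ => repu (n + 1) (b - x₀) :=
      (continuous_repu _).comp (continuous_id.sub continuous_const)
    exact continuous_const.mul ((h₁.mul h3).add ((continuous_const.mul h₂).mul h4))
  have key := hasDerivAt_integral_of_dominated_loc_of_deriv_le (μ := volume)
    (F := F) (F' := F') (x₀ := x₀) (s := ball x₀ 1)
    (bound := fun b => ((n + 2 : ℕ) : ℝ) * (2 * K) / (1 + b ^ 2)) (ball_mem_nhds x₀ one_pos)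
    (Eventually.of_forall fun x => (hcontF x).aestronglyMeasurable)
    ?hint ?hmeas' ?hbound ?hbint ?hdiff
  · rw [hGm2]
    refine key.2.congr_deriv ?_
    symm
    rw [hF']
    simp only []
    rw [integral_const_mul]
    rfl
  case hint =>
    exact integrable_pair (by omega) hC h₁ h₂ hb₁ hb₂ _ x₀
  case hmeas' =>
    exact hcontF'.aestronglyMeasurable
  case hbound =>
    refine Eventually.of_forall fun b => fun x hx => ?_
    have hxA : |x| ≤ A := by
      rw [mem_ball, Real.dist_eq] at hx
      rw [hA]
      have := abs_sub_abs_le_abs_sub x x₀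
      linarith
    have k1 : |σ₁ b * repu (n + 1) (x - b)| ≤ K / (1 + b ^ 2) :=
      key_bound (by omega) hC hb₁ (by positivity) hxA b (x - b) le_rfl
    have k2 : |σ₂ b * repu (n + 1) (b - x)| ≤ K / (1 + b ^ 2) :=
      key_bound (by omega) hC hb₂ (by positivity) hxA b (b - x) (le_of_eq (abs_sub_comm b x))
    rw [hF']
    simp only [Real.norm_eq_abs]
    rw [abs_mul, abs_of_nonneg (by positivity : (0:ℝ) ≤ ((n + 2 : ℕ) : ℝ)), mul_div_assoc]
    refine mul_le_mul_of_nonneg_left ?_ (by positivity)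
    calc |σ₁ b * repu (n + 1) (x - b) + (-1 : ℝ) ^ n * σ₂ b * repu (n + 1) (b - x)|
        ≤ |σ₁ b * repu (n + 1) (x - b)| + |(-1 : ℝ) ^ n| * |σ₂ b * repu (n + 1) (b - x)| := by
          refine (abs_add_le _ _).trans ?_
          rw [mul_assoc, abs_mul ((-1 : ℝ) ^ n)]
      _ ≤ K / (1 + b ^ 2) + 1 * (K / (1 + b ^ 2)) := by
          have : |(-1 : ℝ) ^ n| = 1 := by
            rw [abs_pow, abs_neg, abs_one, one_pow]
          rw [this]
          gcongr
      _ = 2 * K / (1 + b ^ 2) := by ring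
  case hbint =>
    have := (integrable_inv_one_add_sq).const_mul (((n + 2 : ℕ) : ℝ) * (2 * K))
    refine this.congr (Eventually.of_forall fun b => ?_)
    simp [div_eq_mul_inv]
  case hdiff =>
    refine Eventually.of_forall fun b => fun x _ => ?_
    have d1 : HasDerivAt (fun x : ℝ => repu (n + 2) (x - b))
        ((((n + 1 : ℕ) : ℝ) + 1) * repu (n + 1) (x - b) * 1) x := by
      exact (hasDerivAt_repu (n + 1) (by omega) (x - b)).comp x
        ((hasDerivAt_id x).sub_const b)
    have d2 : HasDerivAt (fun x : ℝ => repu (n + 2) (b - x))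
        ((((n + 1 : ℕ) : ℝ) + 1) * repu (n + 1) (b - x) * (0 - 1)) x := by
      exact (hasDerivAt_repu (n + 1) (by omega) (b - x)).comp x
        ((hasDerivAt_const x b).sub (hasDerivAt_id x))
    have := (d1.const_mul (σ₁ b)).add (d2.const_mul ((-1 : ℝ) ^ (n + 1) * σ₂ b))
    refine this.congr_deriv ?_
    symm
    rw [hF']
    simp only []
    push_cast
    ring_nf

lemma hasDerivAt_Gm_one (hp : 1 ≤ p) (hC : 0 ≤ C)
    (h₁ : Continuous σ₁) (h₂ : Continuous σ₂)
    (hb₁ : ∀ b, |σ₁ b| ≤ C / (1 + |b| ^ (p + 2)))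
    (hb₂ : ∀ b, |σ₂ b| ≤ C / (1 + |b| ^ (p + 2))) (x₀ : ℝ) :
    HasDerivAt (Gm σ₁ σ₂ 1) (Gm σ₁ σ₂ 0 x₀) x₀ := by
  have hi₁ : Integrable σ₁ := integrable_decay hC h₁ hb₁
  have hi₂ : Integrable σ₂ := integrable_decay hC h₂ hb₂
  set F : ℝ → ℝ → ℝ := fun x b =>
    σ₁ b * repu 1 (x - b) + (-1 : ℝ) ^ 0 * σ₂ b * repu 1 (b - x) with hFdef
  set F' : ℝ → ℝ := fun b =>
    Set.indicator (Set.Iio x₀) σ₁ b - Set.indicator (Set.Ioi x₀) σ₂ b with hF'def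
  have hGm1 : Gm σ₁ σ₂ 1 = fun x => ∫ b : ℝ, F x b := rfl
  have hcontF : ∀ x : ℝ, Continuous (F x) := by
    intro x
    have h3 : Continuous fun b : ℝ => repu 1 (x - b) :=
      (continuous_repu _).comp (continuous_const.sub continuous_id)
    have h4 : Continuous fun b : ℝ => repu 1 (b - x) :=
      (continuous_repu _).comp (continuous_id.sub continuous_const)
    exact (h₁.mul h3).add ((continuous_const.mul h₂).mul h4)
  have hne : ∀ᵐ b : ℝ, b ≠ x₀ := by
    rw [ae_iff]
    have : {b : ℝ | ¬b ≠ x₀} = {x₀} := by ext b; simp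
    rw [this]
    exact measure_singleton x₀
  have key := hasDerivAt_integral_of_dominated_loc_of_lip (μ := volume) (𝕜 := ℝ)
    (F := F) (F' := F') (x₀ := x₀) (s := ball x₀ 1)
    (bound := fun b => |σ₁ b| + |σ₂ b|) (ball_mem_nhds x₀ one_pos)
    (Eventually.of_forall fun x => (hcontF x).aestronglyMeasurable)
    (integrable_pair hp hC h₁ h₂ hb₁ hb₂ _ x₀)
    ((h₁.aestronglyMeasurable.indicator measurableSet_Iio).sub
      (h₂.aestronglyMeasurable.indicator measurableSet_Ioi))
    ?hlip (hi₁.abs.add hi₂.abs) ?hdiff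
  · rw [hGm1]
    refine key.2.congr_deriv ?_
    symm
    rw [hF'def]
    rw [integral_sub (hi₁.indicator measurableSet_Iio) (hi₂.indicator measurableSet_Ioi),
      integral_indicator measurableSet_Iio, integral_indicator measurableSet_Ioi]
    rfl
  case hlip =>
    refine Eventually.of_forall fun b => ?_
    have L : LipschitzWith (Real.nnabs (|σ₁ b| + |σ₂ b|)) (fun x => F x b) := by
      apply LipschitzWith.of_dist_le_mul
      intro x y
      rw [Real.dist_eq, Real.dist_eq, Real.coe_nnabs,
        abs_of_nonneg (by positivity : (0:ℝ) ≤ |σ₁ b| + |σ₂ b|)]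
      have e1 : |repu 1 (x - b) - repu 1 (y - b)| ≤ |x - y| := by
        have h := abs_max_sub_max_le_abs (x - b) (y - b) 0
        have h2 : x - b - (y - b) = x - y := by ring
        simpa [repu, h2] using h
      have e2 : |repu 1 (b - x) - repu 1 (b - y)| ≤ |x - y| := by
        have h := abs_max_sub_max_le_abs (b - x) (b - y) 0
        have h2 : b - x - (b - y) = y - x := by ring
        rw [abs_sub_comm x y]
        simpa [repu, h2] using h
      have hstep : F x b - F y b =
          σ₁ b * (repu 1 (x - b) - repu 1 (y - b)) + σ₂ b * (repu 1 (b - x) - repu 1 (b - y)) := by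
        rw [hFdef]; simp only [pow_zero, one_mul]; ring
      rw [hstep]
      calc |σ₁ b * (repu 1 (x - b) - repu 1 (y - b)) + σ₂ b * (repu 1 (b - x) - repu 1 (b - y))|
          ≤ |σ₁ b| * |repu 1 (x - b) - repu 1 (y - b)| + |σ₂ b| * |repu 1 (b - x) - repu 1 (b - y)| := by
            refine (abs_add_le _ _).trans ?_
            rw [abs_mul, abs_mul]
        _ ≤ |σ₁ b| * |x - y| + |σ₂ b| * |x - y| := by
            gcongr
        _ = (|σ₁ b| + |σ₂ b|) * |x - y| := by ring
    exact L.lipschitzOnWith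
  case hdiff =>
    filter_upwards [hne] with b hb
    rcases lt_or_gt_of_ne hb with hlt | hgt
    · have hF'b : F' b = σ₁ b := by
        have hnot : b ∉ Set.Ioi x₀ := by simp only [Set.mem_Ioi, not_lt]; linarith
        simp only [hF'def, Set.indicator_of_mem (Set.mem_Iio.mpr hlt),
          Set.indicator_of_notMem hnot, sub_zero]
      rw [hF'b]
      have hd : HasDerivAt (fun x : ℝ => σ₁ b * (x - b) + (-1 : ℝ) ^ 0 * σ₂ b * 0)
          (σ₁ b) x₀ := by
        have := (((hasDerivAt_id x₀).sub_const b).const_mul (σ₁ b)).add_const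
          ((-1 : ℝ) ^ 0 * σ₂ b * 0)
        simpa using this
      refine hd.congr_of_eventuallyEq ?_
      filter_upwards [Ioi_mem_nhds hlt] with x hx
      rw [Set.mem_Ioi] at hx
      rw [hFdef]
      simp only []
      unfold repu
      rw [max_eq_left (by linarith : (0:ℝ) ≤ x - b),
        max_eq_right (by linarith : b - x ≤ (0:ℝ)), pow_one, pow_one]
    · have hF'b : F' b = -σ₂ b := by
        have hnot : b ∉ Set.Iio x₀ := by simp only [Set.mem_Iio, not_lt]; linarith
        simp only [hF'def, Set.indicator_of_mem (Set.mem_Ioi.mpr hgt),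
          Set.indicator_of_notMem hnot, zero_sub]
      rw [hF'b]
      have hd : HasDerivAt (fun x : ℝ => σ₁ b * 0 + (-1 : ℝ) ^ 0 * σ₂ b * (b - x))
          (-σ₂ b) x₀ := by
        have h0 : HasDerivAt (fun x : ℝ => b - x) (0 - 1) x₀ :=
          (hasDerivAt_const x₀ b).sub (hasDerivAt_id x₀)
        have := (h0.const_mul ((-1 : ℝ) ^ 0 * σ₂ b)).const_add (σ₁ b * 0)
        simpa using this
      refine hd.congr_of_eventuallyEq ?_
      filter_upwards [Iio_mem_nhds hgt] with x hx
      rw [Set.mem_Iio] at hx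
      rw [hFdef]
      simp only []
      unfold repu
      rw [max_eq_right (by linarith : x - b ≤ (0:ℝ)),
        max_eq_left (by linarith : (0:ℝ) ≤ b - x), pow_one, pow_one]

lemma hasDerivAt_Gm_zero (hC : 0 ≤ C) (h₁ : Continuous σ₁) (h₂ : Continuous σ₂)
    (hb₁ : ∀ b, |σ₁ b| ≤ C / (1 + |b| ^ (p + 2)))
    (hb₂ : ∀ b, |σ₂ b| ≤ C / (1 + |b| ^ (p + 2))) (x₀ : ℝ) :
    HasDerivAt (Gm σ₁ σ₂ 0) (σ₁ x₀ + σ₂ x₀) x₀ := by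
  have hi₁ : Integrable σ₁ := integrable_decay hC h₁ hb₁
  have hi₂ : Integrable σ₂ := integrable_decay hC h₂ hb₂
  have e₁ : ∀ x : ℝ, (∫ b in Set.Iio x, σ₁ b) =
      (∫ b in Set.Iic (0 : ℝ), σ₁ b) + ∫ b in (0 : ℝ)..x, σ₁ b := by
    intro x
    rw [setIntegral_congr_set Iio_ae_eq_Iic,
      ← intervalIntegral.integral_Iic_sub_Iic hi₁.integrableOn hi₁.integrableOn]
    ring
  have e₂ : ∀ x : ℝ, (∫ b in Set.Ioi x, σ₂ b) =
      (∫ b : ℝ, σ₂ b) - ((∫ b in Set.Iic (0 : ℝ), σ₂ b) + ∫ b in (0 : ℝ)..x, σ₂ b) := by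
    intro x
    rw [← intervalIntegral.integral_Iic_sub_Iic hi₂.integrableOn hi₂.integrableOn]
    have h := intervalIntegral.integral_Iic_add_Ioi (b := x) hi₂.integrableOn hi₂.integrableOn
    linarith
  have d₁ : HasDerivAt (fun x : ℝ => ∫ b in (0 : ℝ)..x, σ₁ b) (σ₁ x₀) x₀ :=
    intervalIntegral.integral_hasDerivAt_right hi₁.intervalIntegrable
      (h₁.stronglyMeasurableAtFilter _ _) h₁.continuousAt
  have d₂ : HasDerivAt (fun x : ℝ => ∫ b in (0 : ℝ)..x, σ₂ b) (σ₂ x₀) x₀ :=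
    intervalIntegral.integral_hasDerivAt_right hi₂.intervalIntegrable
      (h₂.stronglyMeasurableAtFilter _ _) h₂.continuousAt
  have hd := (d₁.add d₂).const_add
    ((∫ b in Set.Iic (0 : ℝ), σ₁ b) + (∫ b in Set.Iic (0 : ℝ), σ₂ b) - ∫ b : ℝ, σ₂ b)
  refine HasDerivAt.congr_of_eventuallyEq hd (Eventually.of_forall fun x => ?_)
  show Gm σ₁ σ₂ 0 x = _
  have : Gm σ₁ σ₂ 0 x = (∫ b in Set.Iio x, σ₁ b) - (∫ b in Set.Ioi x, σ₂ b) := rfl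
  rw [this, e₁ x, e₂ x]
  simp only [Pi.add_apply]
  ring

end Main

end Stmt6Aux

/-- An admissible representation of `f : ℝ → ℝ`: a pair of continuous densities
`ρ₁, ρ₋₁` decaying like `1/(1+|b|^{p+2})` and a constant `c` with
`f(x) = ∫ (ρ₁(b)([x−b]₊^p − [−b]₊^p) + ρ₋₁(b)([b−x]₊^p − [b]₊^p))/ψ(b) db + c`. -/
def IsAdmissibleRep (p : ℕ) (f ρ₁ ρ₂ : ℝ → ℝ) (c : ℝ) : Prop :=
  Continuous ρ₁ ∧ Continuous ρ₂ ∧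
  (∃ C > 0, ∀ b : ℝ, |ρ₁ b| ≤ C / (1 + |b| ^ (p + 2)) ∧ |ρ₂ b| ≤ C / (1 + |b| ^ (p + 2))) ∧
  ∀ x : ℝ, f x = (∫ b : ℝ,
      (ρ₁ b * (repu p (x - b) - repu p (-b)) + ρ₂ b * (repu p (b - x) - repu p b)) / ψ p b) + c

open Stmt6Aux in
/-- for odd `p`, a function with an admissible representation is
`(p+1)`-times differentiable and `f^{(p+1)}(x) = p!·(ρ₁(x) + ρ₋₁(x))/ψ(x)`. -/
theorem stmt_6 (p : ℕ) (hp : 1 ≤ p) (hodd : Odd p) (f ρ₁ ρ₂ : ℝ → ℝ) (c : ℝ)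
    (hrep : IsAdmissibleRep p f ρ₁ ρ₂ c) :
    (∀ k < p + 1, Differentiable ℝ (iteratedDeriv k f)) ∧
    (∀ x : ℝ, iteratedDeriv (p + 1) f x = (p.factorial : ℝ) * (ρ₁ x + ρ₂ x) / ψ p x) := by
  obtain ⟨hρ₁, hρ₂, ⟨C, hCpos, hbd⟩, hfx⟩ := hrep
  obtain ⟨q, rfl⟩ : ∃ q, p = q + 1 := ⟨p - 1, (Nat.succ_pred_eq_of_pos hp).symm⟩
  have hC0 : (0 : ℝ) ≤ C := hCpos.le
  have hψc : Continuous (ψ (q + 1)) := continuous_const.add (continuous_abs.pow _)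
  have hψ1 : ∀ b : ℝ, 1 ≤ ψ (q + 1) b := fun b => le_add_of_nonneg_right (by positivity)
  have hψ0 : ∀ b : ℝ, ψ (q + 1) b ≠ 0 := fun b => by have := hψ1 b; intro h; rw [h] at this; linarith
  set σ₁ : ℝ → ℝ := fun b => ρ₁ b / ψ (q + 1) b with hσ₁def
  set σ₂ : ℝ → ℝ := fun b => ρ₂ b / ψ (q + 1) b with hσ₂def
  have hc₁ : Continuous σ₁ := hρ₁.div hψc hψ0
  have hc₂ : Continuous σ₂ := hρ₂.div hψc hψ0
  have habs : ∀ (ρ : ℝ → ℝ) (b : ℝ), |ρ b / ψ (q + 1) b| ≤ |ρ b| := by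
    intro ρ b
    rw [abs_div, abs_of_nonneg (show (0:ℝ) ≤ ψ (q + 1) b by linarith [hψ1 b])]
    exact div_le_self (abs_nonneg _) (hψ1 b)
  have hb₁ : ∀ b, |σ₁ b| ≤ C / (1 + |b| ^ (q + 1 + 2)) :=
    fun b => le_trans (habs ρ₁ b) (hbd b).1
  have hb₂ : ∀ b, |σ₂ b| ≤ C / (1 + |b| ^ (q + 1 + 2)) :=
    fun b => le_trans (habs ρ₂ b) (hbd b).2
  have heven : (-1 : ℝ) ^ q = 1 := Even.neg_one_pow (Nat.not_odd_iff_even.mp (Nat.odd_add_one.mp hodd))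
  have hint : ∀ x : ℝ, Integrable (fun b : ℝ =>
      σ₁ b * repu (q + 1) (x - b) + (-1 : ℝ) ^ q * σ₂ b * repu (q + 1) (b - x)) :=
    fun x => integrable_pair le_rfl hC0 hc₁ hc₂ hb₁ hb₂ _ x
  have hGmdef : ∀ y : ℝ, Gm σ₁ σ₂ (q + 1) y =
      ∫ b : ℝ, (σ₁ b * repu (q + 1) (y - b) + (-1 : ℝ) ^ q * σ₂ b * repu (q + 1) (b - y)) :=
    fun y => rfl
  have hfeq : f = fun x => Gm σ₁ σ₂ (q + 1) x + (c - Gm σ₁ σ₂ (q + 1) 0) := by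
    funext x
    rw [hfx x]
    have hpt : ∀ b : ℝ, (ρ₁ b * (repu (q + 1) (x - b) - repu (q + 1) (-b)) +
        ρ₂ b * (repu (q + 1) (b - x) - repu (q + 1) b)) / ψ (q + 1) b =
        (σ₁ b * repu (q + 1) (x - b) + (-1 : ℝ) ^ q * σ₂ b * repu (q + 1) (b - x)) -
        (σ₁ b * repu (q + 1) (0 - b) + (-1 : ℝ) ^ q * σ₂ b * repu (q + 1) (b - 0)) := by
      intro b
      rw [heven, hσ₁def, hσ₂def]
      have h1 : repu (q + 1) (0 - b) = repu (q + 1) (-b) := by rw [zero_sub]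
      have h2 : repu (q + 1) (b - 0) = repu (q + 1) b := by rw [sub_zero]
      rw [h1, h2]
      simp only []
      have := hψ0 b
      field_simp
      ring
    rw [hGmdef x, hGmdef 0]
    rw [integral_congr_ae (Eventually.of_forall hpt), integral_sub (hint x) (hint 0)]
    ring
  have hstep : ∀ m, m + 1 ≤ q + 1 → ∀ x : ℝ,
      HasDerivAt (Gm σ₁ σ₂ (m + 1)) (((m + 1 : ℕ) : ℝ) * Gm σ₁ σ₂ m x) x := by
    intro m hm x
    match m with
    | 0 =>
      have := hasDerivAt_Gm_one (Nat.succ_le_succ (Nat.zero_le q)) hC0 hc₁ hc₂ hb₁ hb₂ x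
      simpa using this
    | n + 1 =>
      exact hasDerivAt_Gm_two hC0 hc₁ hc₂ hb₁ hb₂ (by omega) x
  have hIter : ∀ k, k ≤ q + 1 → iteratedDeriv k f =
      fun x => (((q + 1).descFactorial k : ℕ) : ℝ) * Gm σ₁ σ₂ (q + 1 - k) x +
        (if k = 0 then c - Gm σ₁ σ₂ (q + 1) 0 else 0) := by
    intro k
    induction k with
    | zero =>
      intro _
      rw [iteratedDeriv_zero, hfeq]
      funext x
      simp
    | succ k ih =>
      intro hk
      rw [iteratedDeriv_succ, ih (by omega)]
      funext x
      have hpk : q + 1 - k = (q + 1 - k - 1) + 1 := by omega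
      have hder := hstep (q + 1 - k - 1) (by omega) x
      rw [← hpk] at hder
      have hD : HasDerivAt (fun x => (((q + 1).descFactorial k : ℕ) : ℝ) * Gm σ₁ σ₂ (q + 1 - k) x +
          (if k = 0 then c - Gm σ₁ σ₂ (q + 1) 0 else 0))
          ((((q + 1).descFactorial k : ℕ) : ℝ) *
            (((q + 1 - k : ℕ) : ℝ) * Gm σ₁ σ₂ (q + 1 - k - 1) x)) x :=
      (hder.const_mul _).add_const _
      rw [hD.deriv]
      have h1 : q + 1 - (k + 1) = q + 1 - k - 1 := by omega
      rw [h1]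
      simp only [Nat.descFactorial_succ, if_neg (Nat.succ_ne_zero k), add_zero]
      push_cast
      have h2 : q + 1 - k ≠ 0 := by omega
      ring
  have hGdiff : ∀ m, m ≤ q + 1 → Differentiable ℝ (Gm σ₁ σ₂ m) := by
    intro m hm
    cases m with
    | zero => exact fun x => (hasDerivAt_Gm_zero hC0 hc₁ hc₂ hb₁ hb₂ x).differentiableAt
    | succ n => exact fun x => (hstep n hm x).differentiableAt
  constructor
  · intro k hk
    rw [hIter k (by omega)]
    exact ((hGdiff _ (by omega)).const_mul _).add_const _
  · intro x
    rw [iteratedDeriv_succ, hIter (q + 1) le_rfl]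
    simp only [Nat.sub_self, if_neg (Nat.succ_ne_zero q)]
    have hD : HasDerivAt (fun x => (((q + 1).descFactorial (q + 1) : ℕ) : ℝ) * Gm σ₁ σ₂ 0 x + 0)
        ((((q + 1).descFactorial (q + 1) : ℕ) : ℝ) * (σ₁ x + σ₂ x)) x :=
      ((hasDerivAt_Gm_zero hC0 hc₁ hc₂ hb₁ hb₂ x).const_mul _).add_const 0
    rw [hD.deriv, Nat.descFactorial_self]
    rw [hσ₁def, hσ₂def]
    simp only []
    rw [← add_div, mul_div_assoc]
end

section
/- Let p ≥ 1 be an odd integer and let (ρ₁, ρ₋₁, c) be an admissible representation of f : ℝ → ℝ. Then the limits L₋ = lim_{x→−∞} f^{(p)}(x) and L₊ = lim_{x→+∞} f^{(p)}(x) exist, and L₋ + L₊ = p!·∫_ℝ μ₋(b)/ψ(b) db. -/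
open MeasureTheory Filter

section helpers
open Set

lemma continuous_repu (k : ℕ) : Continuous (repu k) :=
  (continuous_id.max continuous_const).pow k

lemma repu_nonneg (k : ℕ) (t : ℝ) : 0 ≤ repu k t := pow_nonneg (le_max_right _ _) _

lemma abs_repu_le (k : ℕ) (t : ℝ) : |repu k t| ≤ |t| ^ k := by
  rw [abs_of_nonneg (repu_nonneg k t)]
  exact pow_le_pow_left₀ (le_max_right _ _) (max_le (le_abs_self t) (abs_nonneg t)) k

lemma pow_sub_pow_abs_le {M : ℝ} {u v : ℝ} (hu0 : 0 ≤ u) (huM : u ≤ M)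
    (hv0 : 0 ≤ v) (hvM : v ≤ M) (k : ℕ) :
    |u ^ k - v ^ k| ≤ k * M ^ (k - 1) * |u - v| := by
  rcases Nat.eq_zero_or_pos k with rfl | hk
  · simp
  rw [← geom_sum₂_mul, abs_mul]
  have hM : 0 ≤ M := hu0.trans huM
  gcongr
  calc |∑ i ∈ Finset.range k, u ^ i * v ^ (k - 1 - i)|
      ≤ ∑ i ∈ Finset.range k, |u ^ i * v ^ (k - 1 - i)| := Finset.abs_sum_le_sum_abs _ _
    _ ≤ ∑ _i ∈ Finset.range k, M ^ (k - 1) := by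
        apply Finset.sum_le_sum; intro i hi
        rw [abs_mul, abs_pow, abs_pow, abs_of_nonneg hu0, abs_of_nonneg hv0]
        calc u ^ i * v ^ (k - 1 - i) ≤ M ^ i * M ^ (k - 1 - i) := by gcongr
          _ = M ^ (k - 1) := by rw [← pow_add]; congr 1; simp at hi; omega
    _ = k * M ^ (k - 1) := by rw [Finset.sum_const, Finset.card_range, nsmul_eq_mul]

lemma repu_sub_le {k : ℕ} {M a c : ℝ} (ha : |a| ≤ M) (hc : |c| ≤ M) :
    |repu k a - repu k c| ≤ k * M ^ (k - 1) * |a - c| := by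
  have h1 : |max a 0 - max c 0| ≤ |a - c| := abs_max_sub_max_le_abs a c 0
  have h2 : |repu k a - repu k c| ≤ k * M ^ (k - 1) * |max a 0 - max c 0| :=
    pow_sub_pow_abs_le (le_max_right _ _) (max_le ((le_abs_self a).trans ha) ((abs_nonneg a).trans ha))
      (le_max_right _ _) (max_le ((le_abs_self c).trans hc) ((abs_nonneg c).trans hc)) k
  refine h2.trans ?_
  have hM : 0 ≤ M := (abs_nonneg a).trans ha
  gcongr


lemma hasDerivAt_repu {k : ℕ} (hk : 2 ≤ k) (t : ℝ) :
    HasDerivAt (repu k) (k * repu (k - 1) t) t := by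
  rcases lt_trichotomy t 0 with ht | rfl | ht
  · have h0 : repu (k - 1) t = 0 := by
      simp [repu, max_eq_right ht.le, zero_pow (by omega : k - 1 ≠ 0)]
    rw [h0, mul_zero]
    apply (hasDerivAt_const t (0 : ℝ)).congr_of_eventuallyEq
    filter_upwards [Iio_mem_nhds ht] with y hy
    simp [repu, max_eq_right (mem_Iio.mp hy).le, zero_pow (by omega : k ≠ 0)]
  · have h0 : repu (k - 1) 0 = 0 := by
      simp [repu, zero_pow (by omega : k - 1 ≠ 0)]
    rw [h0, mul_zero, hasDerivAt_iff_tendsto_slope]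
    have hb : ∀ y : ℝ, ‖slope (repu k) 0 y‖ ≤ |y| ^ (k - 1) := by
      intro y
      rcases eq_or_ne y 0 with rfl | hy
      · simp [slope]
      · have hs : slope (repu k) 0 y = repu k y / y := by
          simp [slope, repu, zero_pow (by omega : k ≠ 0), div_eq_inv_mul]
        rw [hs, Real.norm_eq_abs, abs_div]
        rw [div_le_iff₀ (abs_pos.mpr hy)]
        calc |repu k y| ≤ |y| ^ k := abs_repu_le k y
          _ = |y| ^ (k - 1) * |y| := by rw [← pow_succ]; congr 1; omega
    have hg : Tendsto (fun y : ℝ => |y| ^ (k - 1)) (nhdsWithin 0 {(0:ℝ)}ᶜ) (nhds 0) := by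
      have h : Tendsto (fun y : ℝ => |y| ^ (k - 1)) (nhds 0) (nhds (|(0:ℝ)| ^ (k - 1))) :=
        (continuous_abs.pow (k - 1)).tendsto (0 : ℝ)
      have h2 := h.mono_left (nhdsWithin_le_nhds (s := {(0:ℝ)}ᶜ))
      simpa [zero_pow (by omega : k - 1 ≠ 0)] using h2
    exact squeeze_zero_norm hb hg
  · have h1 : HasDerivAt (fun y : ℝ => y ^ k) ((k : ℝ) * t ^ (k - 1)) t := hasDerivAt_pow k t
    have h2 : repu (k - 1) t = t ^ (k - 1) := by simp [repu, max_eq_left ht.le]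
    rw [h2]
    apply h1.congr_of_eventuallyEq
    filter_upwards [Ioi_mem_nhds ht] with y hy
    simp [repu, max_eq_left (mem_Ioi.mp hy).le]

lemma hasDerivAt_repu_one {b x : ℝ} (h : b ≠ x) :
    HasDerivAt (fun y => repu 1 (y - b)) (Set.indicator (Iio x) (fun _ => (1:ℝ)) b) x := by
  rcases lt_or_gt_of_ne h with hb | hb
  · rw [Set.indicator_of_mem (mem_Iio.mpr hb)]
    apply ((hasDerivAt_id x).sub_const b).congr_of_eventuallyEq
    filter_upwards [Ioi_mem_nhds hb] with y hy
    simp [repu, max_eq_left (by linarith [mem_Ioi.mp hy] : (0:ℝ) ≤ y - b)]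
  · rw [Set.indicator_of_notMem (by simp [mem_Iio]; linarith : b ∉ Iio x)]
    apply (hasDerivAt_const x (0 : ℝ)).congr_of_eventuallyEq
    filter_upwards [Iio_mem_nhds hb] with y hy
    simp [repu, max_eq_right (by linarith [mem_Iio.mp hy] : y - b ≤ 0)]


lemma growth_le (p n : ℕ) (hn : n ≤ p) (A : ℝ) (hA : 0 ≤ A) (b : ℝ) :
    (A + |b|) ^ n * (1 + b ^ 2) ≤ (2 * (A + 1)) ^ (p + 2) * (1 + |b| ^ (p + 2)) := by
  have hb : (0:ℝ) ≤ |b| := abs_nonneg b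
  have h1 : (A + |b|) ^ n ≤ (A + 1 + |b|) ^ n := by gcongr; linarith
  have h2 : 1 + b ^ 2 ≤ (A + 1 + |b|) ^ 2 := by nlinarith [sq_abs b]
  have h3 : (A + |b|) ^ n * (1 + b ^ 2) ≤ (A + 1 + |b|) ^ (n + 2) := by
    rw [pow_add]
    exact mul_le_mul h1 h2 (by positivity) (by positivity)
  have h4 : (A + 1 + |b|) ^ (n + 2) ≤ (A + 1 + |b|) ^ (p + 2) := by
    apply pow_le_pow_right₀ (by linarith) (by omega)
  have h5 : A + 1 + |b| ≤ (2 * (A + 1)) * max 1 |b| := by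
    rcases le_total |b| 1 with h | h
    · rw [max_eq_left h]; nlinarith
    · rw [max_eq_right h]; nlinarith
  have h6 : (A + 1 + |b|) ^ (p + 2) ≤ (2 * (A + 1)) ^ (p + 2) * (max 1 |b|) ^ (p + 2) := by
    rw [← mul_pow]
    exact pow_le_pow_left₀ (by positivity) h5 _
  have h7 : (max 1 |b|) ^ (p + 2) ≤ 1 + |b| ^ (p + 2) := by
    rcases le_total |b| 1 with h | h
    · rw [max_eq_left h, one_pow]; nlinarith [pow_nonneg hb (p + 2)]
    · rw [max_eq_right h]; nlinarith [pow_nonneg hb (p + 2)]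
  calc (A + |b|) ^ n * (1 + b ^ 2) ≤ (A + 1 + |b|) ^ (p + 2) := h3.trans h4
    _ ≤ (2 * (A + 1)) ^ (p + 2) * (max 1 |b|) ^ (p + 2) := h6
    _ ≤ (2 * (A + 1)) ^ (p + 2) * (1 + |b| ^ (p + 2)) := by gcongr

lemma integrable_decay2 {g : ℝ → ℝ} (hg : Continuous g) (K : ℝ)
    (h : ∀ b, |g b| ≤ K / (1 + b ^ 2)) : Integrable g := by
  have hI : Integrable (fun b : ℝ => K / (1 + b ^ 2)) := by
    simpa [div_eq_mul_inv] using integrable_inv_one_add_sq.const_mul K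
  exact hI.mono hg.aestronglyMeasurable (Filter.Eventually.of_forall fun b => by
    rw [Real.norm_eq_abs, Real.norm_eq_abs]
    exact (h b).trans (le_abs_self _))

lemma integrable_mul_growth {p : ℕ} {w : ℝ → ℝ} (hw : Continuous w) {C : ℝ} (hC : 0 ≤ C)
    (hwb : ∀ b, |w b| ≤ C / (1 + |b| ^ (p + 2)))
    {g : ℝ → ℝ} (hg : Continuous g) {K A : ℝ} (hK : 0 ≤ K) (hA : 0 ≤ A) {n : ℕ} (hn : n ≤ p)
    (hgb : ∀ b, |g b| ≤ K * (A + |b|) ^ n) :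
    Integrable (fun b => w b * g b) := by
  apply integrable_decay2 (hw.mul hg) (C * K * (2 * (A + 1)) ^ (p + 2))
  intro b
  have hψ : (0:ℝ) < 1 + |b| ^ (p + 2) := by positivity
  have h2 : (0:ℝ) < 1 + b ^ 2 := by positivity
  rw [Pi.mul_apply, abs_mul]
  have step1 : |w b| * |g b| ≤ C / (1 + |b| ^ (p + 2)) * (K * (A + |b|) ^ n) :=
    mul_le_mul (hwb b) (hgb b) (abs_nonneg _) (by positivity)
  refine step1.trans ?_
  rw [div_mul_eq_mul_div, div_le_div_iff₀ hψ h2]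
  have := growth_le p n hn A hA b
  calc C * (K * (A + |b|) ^ n) * (1 + b ^ 2)
      = C * K * ((A + |b|) ^ n * (1 + b ^ 2)) := by ring
    _ ≤ C * K * ((2 * (A + 1)) ^ (p + 2) * (1 + |b| ^ (p + 2))) := by
        gcongr
    _ = C * K * (2 * (A + 1)) ^ (p + 2) * (1 + |b| ^ (p + 2)) := by ring

lemma Phi_hasDerivAt {p : ℕ} {w : ℝ → ℝ} (hw : Continuous w) {C : ℝ} (hC : 0 ≤ C)
    (hwb : ∀ b, |w b| ≤ C / (1 + |b| ^ (p + 2))) {k : ℕ} (hk1 : 1 ≤ k) (hkp : k ≤ p)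
    (x : ℝ) {D : ℝ → ℝ} (hDmeas : AEStronglyMeasurable (fun b => w b * D b) volume)
    (hD : ∀ᵐ b ∂(volume : Measure ℝ), HasDerivAt (fun y => repu k (y - b)) (D b) x) :
    HasDerivAt (fun y => ∫ b : ℝ, w b * repu k (y - b)) (∫ b : ℝ, w b * D b) x := by
  have hgcont : ∀ y : ℝ, Continuous (fun b : ℝ => repu k (y - b)) := fun y =>
    (continuous_repu k).comp (continuous_const.sub continuous_id)
  have habs : ∀ y b : ℝ, |repu k (y - b)| ≤ 1 * (|y| + |b|) ^ k := by
    intro y b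
    rw [one_mul]
    refine (abs_repu_le k _).trans ?_
    apply pow_le_pow_left₀ (abs_nonneg _)
    calc |y - b| = |y + (-b)| := by ring_nf
      _ ≤ |y| + |(-b)| := abs_add_le _ _
      _ = |y| + |b| := by rw [abs_neg]
  have key := hasDerivAt_integral_of_dominated_loc_of_lip (μ := (volume : Measure ℝ)) (𝕜 := ℝ)
    (F := fun y b => w b * repu k (y - b)) (F' := fun b => w b * D b)
    (x₀ := x) (s := Metric.ball x 1)
    (bound := fun b => |w b| * ((k : ℝ) * (|x| + 1 + |b|) ^ (k - 1)))
    (Metric.ball_mem_nhds x one_pos)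
    (Filter.Eventually.of_forall fun y => (hw.mul (hgcont y)).aestronglyMeasurable)
    (integrable_mul_growth hw hC hwb (hgcont x) zero_le_one (abs_nonneg x) hkp (habs x))
    hDmeas
    ?_ ?_ (hD.mono fun b hb => hb.const_mul (w b))
  · exact key.2
  · -- Lipschitz
    refine Filter.Eventually.of_forall fun b => ?_
    rw [lipschitzOnWith_iff_dist_le_mul]
    intro y hy z hz
    rw [Real.dist_eq, Real.dist_eq]
    have hMb : ∀ u ∈ Metric.ball x 1, |u - b| ≤ |x| + 1 + |b| := by
      intro u hu
      have : |u - x| < 1 := by simpa [Real.dist_eq] using Metric.mem_ball.mp hu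
      calc |u - b| = |(u - x) + (x - b)| := by ring_nf
        _ ≤ |u - x| + |x - b| := abs_add_le _ _
        _ ≤ 1 + (|x| + |b|) := by
            have h2 : |x - b| ≤ |x| + |b| := by
              calc |x - b| = |x + (-b)| := by ring_nf
                _ ≤ |x| + |(-b)| := abs_add_le _ _
                _ = |x| + |b| := by rw [abs_neg]
            linarith
        _ = |x| + 1 + |b| := by ring
    have hM0 : (0:ℝ) ≤ |x| + 1 + |b| := by positivity
    have hcoe : ((Real.nnabs (|w b| * ((k : ℝ) * (|x| + 1 + |b|) ^ (k - 1)))) : ℝ)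
        = |w b| * ((k : ℝ) * (|x| + 1 + |b|) ^ (k - 1)) := by
      rw [Real.coe_nnabs, abs_of_nonneg (by positivity)]
    rw [hcoe]
    calc |w b * repu k (y - b) - w b * repu k (z - b)|
        = |w b| * |repu k (y - b) - repu k (z - b)| := by rw [← mul_sub, abs_mul]
      _ ≤ |w b| * ((k : ℝ) * (|x| + 1 + |b|) ^ (k - 1) * |(y - b) - (z - b)|) := by
          gcongr
          exact repu_sub_le (hMb y hy) (hMb z hz)
      _ = |w b| * ((k : ℝ) * (|x| + 1 + |b|) ^ (k - 1)) * |y - z| := by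
          rw [show (y - b) - (z - b) = y - z by ring]; ring
  · -- bound integrable
    have habs2 : ∀ b : ℝ, |(k : ℝ) * (|x| + 1 + |b|) ^ (k - 1)| ≤ (k : ℝ) * ((|x| + 1) + |b|) ^ (k - 1) := by
      intro b
      rw [abs_of_nonneg (by positivity)]
    exact integrable_mul_growth (continuous_abs.comp hw) hC
      (fun b => by simp only [Function.comp_apply, abs_abs]; exact hwb b)
      (continuous_const.mul (((continuous_const.add continuous_abs)).pow (k - 1)))
      (by positivity) (by positivity) (by omega : k - 1 ≤ p) habs2

lemma Phi_hasDerivAt_ge2 {p : ℕ} {w : ℝ → ℝ} (hw : Continuous w) {C : ℝ} (hC : 0 ≤ C)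
    (hwb : ∀ b, |w b| ≤ C / (1 + |b| ^ (p + 2))) {k : ℕ} (hk2 : 2 ≤ k) (hkp : k ≤ p)
    (x : ℝ) :
    HasDerivAt (fun y => ∫ b : ℝ, w b * repu k (y - b))
      ((k : ℝ) * ∫ b : ℝ, w b * repu (k - 1) (x - b)) x := by
  have hDmeas : AEStronglyMeasurable (fun b : ℝ => w b * ((k : ℝ) * repu (k - 1) (x - b))) volume :=
    (hw.mul (continuous_const.mul ((continuous_repu (k - 1)).comp
      (continuous_const.sub continuous_id)))).aestronglyMeasurable
  have hD : ∀ᵐ b ∂(volume : Measure ℝ),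
      HasDerivAt (fun y => repu k (y - b)) ((k : ℝ) * repu (k - 1) (x - b)) x := by
    refine Filter.Eventually.of_forall fun b => ?_
    have h1 := (hasDerivAt_repu hk2 (x - b)).comp x ((hasDerivAt_id x).sub_const b)
    rw [mul_one] at h1
    exact h1
  have h := Phi_hasDerivAt hw hC hwb (by omega) hkp x hDmeas hD
  have heq : (∫ b : ℝ, w b * ((k : ℝ) * repu (k - 1) (x - b)))
      = (k : ℝ) * ∫ b : ℝ, w b * repu (k - 1) (x - b) := by
    rw [← MeasureTheory.integral_const_mul]
    congr 1; funext b; ring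
  rwa [heq] at h

lemma Phi_hasDerivAt_one {p : ℕ} {w : ℝ → ℝ} (hw : Continuous w) {C : ℝ} (hC : 0 ≤ C)
    (hwb : ∀ b, |w b| ≤ C / (1 + |b| ^ (p + 2))) (hp : 1 ≤ p) (x : ℝ) :
    HasDerivAt (fun y => ∫ b : ℝ, w b * repu 1 (y - b)) (∫ b in Iio x, w b) x := by
  have hfun : (fun b : ℝ => w b * Set.indicator (Iio x) (fun _ => (1:ℝ)) b)
      = Set.indicator (Iio x) w := by
    funext b
    by_cases hb : b ∈ Iio x <;> simp [hb]
  have hDmeas : AEStronglyMeasurable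
      (fun b : ℝ => w b * Set.indicator (Iio x) (fun _ => (1:ℝ)) b) volume := by
    rw [hfun]
    exact hw.aestronglyMeasurable.indicator measurableSet_Iio
  have hne : ∀ᵐ b ∂(volume : Measure ℝ), b ≠ x := by
    have h : (volume : Measure ℝ) {x} = 0 := measure_singleton x
    rw [ae_iff]
    simpa [not_not] using h
  have hD : ∀ᵐ b ∂(volume : Measure ℝ),
      HasDerivAt (fun y => repu 1 (y - b)) (Set.indicator (Iio x) (fun _ => (1:ℝ)) b) x :=
    hne.mono fun b hb => hasDerivAt_repu_one hb
  have h := Phi_hasDerivAt hw hC hwb le_rfl hp x hDmeas hD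
  rwa [hfun, integral_indicator measurableSet_Iio] at h

lemma my_tendsto_Iio_atTop {w : ℝ → ℝ} (hw : Integrable w) :
    Tendsto (fun x : ℝ => ∫ b in Iio x, w b) atTop (nhds (∫ b, w b)) := by
  have h := tendsto_integral_filter_of_dominated_convergence (μ := (volume : Measure ℝ))
    (F := fun x : ℝ => (Iio x).indicator w) (f := w) (bound := fun b => ‖w b‖) (l := atTop)
    (Filter.Eventually.of_forall fun x => hw.aestronglyMeasurable.indicator measurableSet_Iio)
    (Filter.Eventually.of_forall fun x => Filter.Eventually.of_forall fun b =>
      norm_indicator_le_norm_self w b)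
    hw.norm
    (Filter.Eventually.of_forall fun b => by
      apply tendsto_const_nhds.congr'
      filter_upwards [eventually_gt_atTop b] with x hx
      simp [Set.indicator_of_mem (mem_Iio.mpr hx)])
  simpa [integral_indicator measurableSet_Iio] using h

lemma my_tendsto_Iio_atBot {w : ℝ → ℝ} (hw : Integrable w) :
    Tendsto (fun x : ℝ => ∫ b in Iio x, w b) atBot (nhds 0) := by
  have h := tendsto_integral_filter_of_dominated_convergence (μ := (volume : Measure ℝ))
    (F := fun x : ℝ => (Iio x).indicator w) (f := fun _ => (0:ℝ)) (bound := fun b => ‖w b‖)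
    (l := atBot)
    (Filter.Eventually.of_forall fun x => hw.aestronglyMeasurable.indicator measurableSet_Iio)
    (Filter.Eventually.of_forall fun x => Filter.Eventually.of_forall fun b =>
      norm_indicator_le_norm_self w b)
    hw.norm
    (Filter.Eventually.of_forall fun b => by
      apply tendsto_const_nhds.congr'
      filter_upwards [eventually_lt_atBot b] with x hx
      simp [Set.indicator_of_notMem (by simp [mem_Iio]; linarith : b ∉ Iio x)])
  simp only [integral_zero] at h
  simpa [integral_indicator measurableSet_Iio] using h

end helpers

open Filter in
/-- for odd `p` and an admissible representation `(ρ₁, ρ₋₁, c)` of `f`,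
the limits `L₋ = lim_{x→−∞} f^{(p)}(x)` and `L₊ = lim_{x→+∞} f^{(p)}(x)` exist and
`L₋ + L₊ = p!·∫ (ρ₁(b) − ρ₋₁(b))/ψ(b) db`. -/
theorem stmt_7 (p : ℕ) (hp : 1 ≤ p) (hodd : Odd p) (f ρ₁ ρ₂ : ℝ → ℝ) (c : ℝ)
    (hrep : IsAdmissibleRep p f ρ₁ ρ₂ c) :
    ∃ Lm Lp : ℝ,
      Tendsto (iteratedDeriv p f) atBot (nhds Lm) ∧
      Tendsto (iteratedDeriv p f) atTop (nhds Lp) ∧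
      Lm + Lp = (p.factorial : ℝ) * ∫ b : ℝ, (ρ₁ b - ρ₂ b) / ψ p b := by
  open Set in
  obtain ⟨q, rfl⟩ : ∃ q, p = q + 1 := ⟨p - 1, by omega⟩
  obtain ⟨hρ₁, hρ₂, ⟨C, hCpos, hbound⟩, hf⟩ := hrep
  have hC : 0 ≤ C := hCpos.le
  have hψc : Continuous (ψ (q+1)) := continuous_const.add (continuous_abs.pow _)
  have hψ1 : ∀ b, 1 ≤ ψ (q+1) b := fun b => le_add_of_nonneg_right (by positivity)
  have hψpos : ∀ b, 0 < ψ (q+1) b := fun b => lt_of_lt_of_le one_pos (hψ1 b)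
  set w₁ : ℝ → ℝ := fun b => ρ₁ b / ψ (q+1) b with hw₁def
  set w₂ : ℝ → ℝ := fun b => ρ₂ b / ψ (q+1) b with hw₂def
  set w₂' : ℝ → ℝ := fun b => w₂ (-b) with hw₂'def
  have hw₁c : Continuous w₁ := hρ₁.div hψc fun b => (hψpos b).ne'
  have hw₂c : Continuous w₂ := hρ₂.div hψc fun b => (hψpos b).ne'
  have hw₂'c : Continuous w₂' := hw₂c.comp continuous_neg
  have hdivle : ∀ (ρ : ℝ → ℝ) (b : ℝ), |ρ b / ψ (q+1) b| ≤ |ρ b| := by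
    intro ρ b
    rw [abs_div, abs_of_pos (hψpos b)]
    exact div_le_self (abs_nonneg _) (hψ1 b)
  have hw₁b : ∀ b, |w₁ b| ≤ C / (1 + |b| ^ ((q+1) + 2)) :=
    fun b => (hdivle ρ₁ b).trans (hbound b).1
  have hw₂b : ∀ b, |w₂ b| ≤ C / (1 + |b| ^ ((q+1) + 2)) :=
    fun b => (hdivle ρ₂ b).trans (hbound b).2
  have hw₂'b : ∀ b, |w₂' b| ≤ C / (1 + |b| ^ ((q+1) + 2)) := by
    intro b
    have := hw₂b (-b)
    simpa [abs_neg] using this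
  have habsle : ∀ x b : ℝ, ∀ k : ℕ, |repu k (x - b)| ≤ 1 * (|x| + |b|) ^ k := by
    intro x b k
    rw [one_mul]
    refine (abs_repu_le k _).trans ?_
    apply pow_le_pow_left₀ (abs_nonneg _)
    calc |x - b| = |x + (-b)| := by ring_nf
      _ ≤ |x| + |(-b)| := abs_add_le _ _
      _ = |x| + |b| := by rw [abs_neg]
  have hInt : ∀ (w : ℝ → ℝ), Continuous w → (∀ b, |w b| ≤ C / (1 + |b| ^ ((q+1)+2))) →
      ∀ (k : ℕ), k ≤ q + 1 → ∀ x : ℝ, Integrable (fun b => w b * repu k (x - b)) := by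
    intro w hwc hwb k hk x
    exact integrable_mul_growth hwc hC hwb
      ((continuous_repu k).comp (continuous_const.sub continuous_id)) zero_le_one (abs_nonneg x)
      hk (fun b => habsle x b k)
  have hIntw : ∀ (w : ℝ → ℝ), Continuous w → (∀ b, |w b| ≤ C / (1 + |b| ^ ((q+1)+2))) →
      Integrable w := by
    intro w hwc hwb
    have h := integrable_mul_growth (p := q + 1) hwc hC hwb (g := fun _ => (1:ℝ))
      continuous_const (K := 1) zero_le_one (A := 0) le_rfl (n := 0) (Nat.zero_le _)
      (fun b => by norm_num)
    simpa using h
  set Φ : (ℝ → ℝ) → ℕ → ℝ → ℝ := fun w k x => ∫ b : ℝ, w b * repu k (x - b) with hΦdef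
  set c' : ℝ := c - ∫ b : ℝ, (w₁ b * repu (q+1) (-b) + w₂ b * repu (q+1) b) with hc'def
  have hIntH1 : Integrable (fun b : ℝ => w₁ b * repu (q+1) (-b)) := by
    have := hInt w₁ hw₁c hw₁b (q+1) le_rfl 0
    simpa [zero_sub] using this
  have hIntH2 : Integrable (fun b : ℝ => w₂ b * repu (q+1) b) := by
    refine integrable_mul_growth hw₂c hC hw₂b (continuous_repu _) zero_le_one le_rfl le_rfl ?_
    intro b
    rw [one_mul, zero_add]
    exact abs_repu_le (q+1) b
  have hIntH : Integrable (fun b : ℝ => w₁ b * repu (q+1) (-b) + w₂ b * repu (q+1) b) :=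
    hIntH1.add hIntH2
  have hIntB : ∀ x : ℝ, Integrable (fun b : ℝ => w₂ b * repu (q+1) (b - x)) := by
    intro x
    refine integrable_mul_growth hw₂c hC hw₂b
      ((continuous_repu _).comp (continuous_id.sub continuous_const)) zero_le_one
      (abs_nonneg x) le_rfl ?_
    intro b
    rw [one_mul]
    refine (abs_repu_le _ _).trans ?_
    apply pow_le_pow_left₀ (abs_nonneg _)
    calc |b - x| = |(-x) + b| := by ring_nf
      _ ≤ |(-x)| + |b| := abs_add_le _ _
      _ = |x| + |b| := by rw [abs_neg]
  have hfeq : ∀ x : ℝ, f x = Φ w₁ (q+1) x + Φ w₂' (q+1) (-x) + c' := by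
    intro x
    rw [hf x]
    have hptwise : (fun b : ℝ => (ρ₁ b * (repu (q+1) (x - b) - repu (q+1) (-b)) +
        ρ₂ b * (repu (q+1) (b - x) - repu (q+1) b)) / ψ (q+1) b)
        = fun b : ℝ => (w₁ b * repu (q+1) (x - b) + w₂ b * repu (q+1) (b - x))
          - (w₁ b * repu (q+1) (-b) + w₂ b * repu (q+1) b) := by
      funext b
      simp only [hw₁def, hw₂def]
      ring
    have hAB : Integrable (fun b : ℝ => w₁ b * repu (q+1) (x - b) + w₂ b * repu (q+1) (b - x))
        volume := (hInt w₁ hw₁c hw₁b (q+1) le_rfl x).add (hIntB x)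
    rw [hptwise, integral_sub hAB hIntH,
      integral_add (hInt w₁ hw₁c hw₁b (q+1) le_rfl x) (hIntB x)]
    have href : (Φ w₂' (q+1) (-x)) = ∫ b : ℝ, w₂ b * repu (q+1) (b - x) := by
      have h1 : (Φ w₂' (q+1) (-x)) = ∫ b : ℝ, w₂ (-b) * repu (q+1) (-x - b) := rfl
      rw [h1, ← integral_neg_eq_self (fun b : ℝ => w₂ b * repu (q+1) (b - x)) volume]
      congr 1; funext b
      rw [show -x - b = -b - x by ring]
    rw [href, hΦdef, hc'def]
    ring
  have main : ∀ j : ℕ, j ≤ q → ∀ x : ℝ, iteratedDeriv j f x =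
      (((q+1).descFactorial j : ℕ) : ℝ) * (Φ w₁ (q+1-j) x + (-1:ℝ)^j * Φ w₂' (q+1-j) (-x))
        + (if j = 0 then c' else 0) := by
    intro j
    induction j with
    | zero =>
      intro _ x
      simp only [iteratedDeriv_zero, Nat.descFactorial_zero, Nat.cast_one, one_mul, pow_zero,
        Nat.sub_zero, if_pos rfl]
      simpa using hfeq x
    | succ j ih =>
      intro hj x
      have hjq : j ≤ q := by omega
      have hfun : iteratedDeriv j f = fun y =>
          (((q+1).descFactorial j : ℕ) : ℝ) * (Φ w₁ (q+1-j) y + (-1:ℝ)^j * Φ w₂' (q+1-j) (-y))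
            + (if j = 0 then c' else 0) := funext fun y => ih hjq y
      rw [iteratedDeriv_succ, hfun]
      set k := q + 1 - j with hk
      have hk2 : 2 ≤ k := by omega
      have hkp : k ≤ q + 1 := by omega
      have h1 : HasDerivAt (fun y => Φ w₁ k y) ((k:ℝ) * Φ w₁ (k-1) x) x :=
        Phi_hasDerivAt_ge2 hw₁c hC hw₁b hk2 hkp x
      have h2 : HasDerivAt (fun y => Φ w₂' k (-y)) (((k:ℝ) * Φ w₂' (k-1) (-x)) * (-1)) x :=
        (Phi_hasDerivAt_ge2 hw₂'c hC hw₂'b hk2 hkp (-x)).comp x (hasDerivAt_neg x)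
      have h3 : HasDerivAt (fun y =>
          (((q+1).descFactorial j : ℕ) : ℝ) * (Φ w₁ k y + (-1:ℝ)^j * Φ w₂' k (-y))
            + (if j = 0 then c' else 0))
          ((((q+1).descFactorial j : ℕ) : ℝ) * ((k:ℝ) * Φ w₁ (k-1) x
            + (-1:ℝ)^j * (((k:ℝ) * Φ w₂' (k-1) (-x)) * (-1)))) x :=
        ((h1.add (h2.const_mul ((-1:ℝ)^j))).const_mul _).add_const _
      rw [h3.deriv]
      have hkk : q + 1 - (j+1) = k - 1 := by omega
      have hcast : (((q+1).descFactorial (j+1) : ℕ) : ℝ)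
          = (k : ℝ) * (((q+1).descFactorial j : ℕ) : ℝ) := by
        rw [Nat.descFactorial_succ, ← hk, Nat.cast_mul]
      rw [hkk, hcast, if_neg (Nat.succ_ne_zero j)]
      ring
  have hfin : ∀ x : ℝ, iteratedDeriv (q+1) f x =
      (((q+1).factorial : ℕ) : ℝ) * ((∫ b in Iio x, w₁ b) - ∫ b in Iio (-x), w₂' b) := by
    intro x
    have hmq : q + 1 - q = 1 := by omega
    have hfun : iteratedDeriv q f = fun y =>
        (((q+1).descFactorial q : ℕ) : ℝ) * (Φ w₁ 1 y + (-1:ℝ)^q * Φ w₂' 1 (-y))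
          + (if q = 0 then c' else 0) := by
      funext y
      have h := main q le_rfl y
      rwa [hmq] at h
    rw [iteratedDeriv_succ, hfun]
    have h1 : HasDerivAt (fun y => Φ w₁ 1 y) (∫ b in Iio x, w₁ b) x :=
      Phi_hasDerivAt_one hw₁c hC hw₁b (by omega) x
    have h2 : HasDerivAt (fun y => Φ w₂' 1 (-y)) ((∫ b in Iio (-x), w₂' b) * (-1)) x :=
      (Phi_hasDerivAt_one hw₂'c hC hw₂'b (by omega) (-x)).comp x (hasDerivAt_neg x)
    have h3 : HasDerivAt (fun y =>
        (((q+1).descFactorial q : ℕ) : ℝ) * (Φ w₁ 1 y + (-1:ℝ)^q * Φ w₂' 1 (-y))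
          + (if q = 0 then c' else 0))
        ((((q+1).descFactorial q : ℕ) : ℝ) * ((∫ b in Iio x, w₁ b)
          + (-1:ℝ)^q * ((∫ b in Iio (-x), w₂' b) * (-1)))) x :=
      ((h1.add (h2.const_mul ((-1:ℝ)^q))).const_mul _).add_const _
    rw [h3.deriv]
    have hq_even : (-1:ℝ)^q = 1 := by
      obtain ⟨m, hm⟩ := hodd
      have : Even q := ⟨m, by omega⟩
      exact this.neg_one_pow
    have hdesc : (q+1).descFactorial q = (q+1).factorial := by
      have h := Nat.descFactorial_self (q+1)
      rw [Nat.descFactorial_succ] at h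
      simpa using h
    rw [hq_even, hdesc]
    ring
  have hw₁int : Integrable w₁ := hIntw w₁ hw₁c hw₁b
  have hw₂int : Integrable w₂ := hIntw w₂ hw₂c hw₂b
  have hw₂'int : Integrable w₂' := hIntw w₂' hw₂'c hw₂'b
  have hfun : iteratedDeriv (q+1) f = fun x =>
      (((q+1).factorial : ℕ) : ℝ) * ((∫ b in Iio x, w₁ b) - ∫ b in Iio (-x), w₂' b) :=
    funext hfin
  refine ⟨(((q+1).factorial : ℕ) : ℝ) * (0 - ∫ b : ℝ, w₂' b),
    (((q+1).factorial : ℕ) : ℝ) * ((∫ b : ℝ, w₁ b) - 0), ?_, ?_, ?_⟩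
  · rw [hfun]
    exact (((my_tendsto_Iio_atBot hw₁int).sub
      ((my_tendsto_Iio_atTop hw₂'int).comp tendsto_neg_atBot_atTop)).const_mul _)
  · rw [hfun]
    exact (((my_tendsto_Iio_atTop hw₁int).sub
      ((my_tendsto_Iio_atBot hw₂'int).comp tendsto_neg_atTop_atBot)).const_mul _)
  · have hneg : (∫ b : ℝ, w₂' b) = ∫ b : ℝ, w₂ b := by
      rw [hw₂'def]
      exact integral_neg_eq_self w₂ volume
    have hsub : (∫ b : ℝ, (ρ₁ b - ρ₂ b) / ψ (q+1) b) = (∫ b : ℝ, w₁ b) - ∫ b : ℝ, w₂ b := by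
      rw [← integral_sub hw₁int hw₂int]
      congr 1; funext b
      simp only [hw₁def, hw₂def]
      rw [sub_div]
    rw [hneg, hsub]
    ring
end
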